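/- arXiv:0803.3141 — 2 statements merged into one kernel-verified Lean document; each statement's English description precedes it below -/
import Mathlib

section
/- Lower bound on the first coordinate of leading exponents: let < be a product order on k[X₁,…,Xₙ] and A ⊆ 𝔸ⁿ a variety; for λ ∈ k let A_λ = A ∩ {X₁ = λ} ⊆ 𝔸ⁿ⁻¹. Then for every β ∈ C(A) (leading exponent of some element of I(A)), β₁ ≥ #{λ ∈ k : p(β) ∈ D(A_λ)}; in particular β₁ ≥ Σ_{λ∈𝔸¹} #(p⁻¹(p(β)) ∩ (\{0\}×D(A_λ))). -/
open MvPolynomial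

/-- `β` is the leading exponent of `f` with respect to the monomial order `m`. -/
def IsLeadExp {σ : Type*} {k : Type*} [CommSemiring k] (m : MonomialOrder σ)
    (f : MvPolynomial σ k) (β : σ →₀ ℕ) : Prop :=
  β ∈ f.support ∧ ∀ α ∈ f.support, α ≠ β → m.toSyn α < m.toSyn β

/-- `C(I)`: the set of leading exponents of nonzero elements of the ideal `I`. -/
def expC {σ : Type*} {k : Type*} [CommSemiring k] (m : MonomialOrder σ)
    (I : Ideal (MvPolynomial σ k)) : Set (σ →₀ ℕ) :=
  {β | ∃ f ∈ I, IsLeadExp m f β}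

/-- `D(I)`: the standard set (set of exponents of standard monomials) of the ideal `I`. -/
def expD {σ : Type*} {k : Type*} [CommSemiring k] (m : MonomialOrder σ)
    (I : Ideal (MvPolynomial σ k)) : Set (σ →₀ ℕ) :=
  (expC m I)ᶜ

/-- The projection `ℕⁿ → ℕⁿ⁻¹` dropping the first coordinate. -/
noncomputable def pr {n : ℕ} (β : Fin (n + 1) →₀ ℕ) : Fin n →₀ ℕ :=
  Finsupp.comapDomain Fin.succ β (Fin.succ_injective n).injOn

/-- The embedding `ℕⁿ⁻¹ → ℕⁿ`, putting `0` in the first coordinate. -/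
noncomputable def emb {n : ℕ} (α : Fin n →₀ ℕ) : Fin (n + 1) →₀ ℕ :=
  Finsupp.mapDomain Fin.succ α

/-- `t` is a *product order* restricting to `tb`: `α < β` iff `p(α) < p(β)`, or
`p(α) = p(β)` and `α₁ < β₁`, where `p` drops the first coordinate. -/
def IsProductOrder {n : ℕ} (t : MonomialOrder (Fin (n + 1)))
    (tb : MonomialOrder (Fin n)) : Prop :=
  ∀ α β : Fin (n + 1) →₀ ℕ,
    (t.toSyn α < t.toSyn β ↔
      (tb.toSyn (pr α) < tb.toSyn (pr β) ∨ (pr α = pr β ∧ α 0 < β 0)))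

/-- The fiber `A_λ = A ∩ {X₁ = λ}`, regarded as a subvariety of `𝔸ⁿ⁻¹`. -/
def fiberAt {k : Type*} {n : ℕ} (A : Set (Fin (n + 1) → k)) (lam : k) :
    Set (Fin n → k) :=
  {y | Fin.cons lam y ∈ A}

/-- `A′` is a `d`-dimensional affine subspace of the affine space with coordinates `ι`. -/
def IsAffineDPlane {k : Type*} [Field k] {ι : Type*} [Fintype ι] (d : ℕ)
    (A' : Set (ι → k)) : Prop :=
  ∃ S : AffineSubspace k (ι → k),
    A' = (S : Set (ι → k)) ∧ A'.Nonempty ∧ Module.finrank k S.direction = d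

/-- `{X_j : j ∈ J}` is a set of free variables of `A′`. -/
def IsFreeVars {k : Type*} [Field k] {ι : Type*} (A' : Set (ι → k)) (J : Finset ι) :
    Prop :=
  ∀ v : ι → k, ∃! x, x ∈ A' ∧ ∀ j ∈ J, x j = v j

/-- `{X_j : j ∈ J}` is the set of *minimal* free variables of `A′`. -/
def IsMinFreeVars {k : Type*} [Field k] {ι : Type*} [LinearOrder ι] [DecidableEq ι]
    (A' : Set (ι → k)) (J : Finset ι) : Prop :=
  IsFreeVars A' J ∧ ∀ j ∈ J, ∀ i ∉ J, i < j → ¬ IsFreeVars A' (insert i (J.erase j))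

/-!
Let `f ∈ I(A)` have leading exponent `β`, and let `φ ∈ k[X₁]` be the coefficient of `X̄^{p(β)}`
in `f`, viewed as a polynomial in `X₁`. For a product order, `β` dominates every exponent of `f`
sharing its tail `p(β)`, so `deg φ = β₁`, and no exponent of `f` has a tail above `p(β)`. Hence
if `φ(λ) ≠ 0`, the specialization `f(λ, X̄) ∈ I(A_λ)` has leading exponent `p(β)`, i.e.
`p(β) ∉ D(A_λ)`. So every `λ` with `p(β) ∈ D(A_λ)` is a root of the nonzero polynomial `φ`,
and there are at most `β₁` of them.
-/

open Polynomial in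
theorem Polynomial.ncard_setOf_isRoot_le {R : Type*} [CommRing R] [IsDomain R] {p : R[X]}
    (hp : p ≠ 0) : {x | p.IsRoot x}.ncard ≤ p.natDegree := by
  classical
  have hroots : {x | p.IsRoot x} = ↑p.roots.toFinset := by
    ext x; simp [mem_roots hp]
  rw [hroots, Set.ncard_coe_finset]
  exact (Multiset.toFinset_card_le _).trans (card_roots' p)

lemma pr_cons {n : ℕ} (i : ℕ) (α : Fin n →₀ ℕ) : pr (Finsupp.cons i α) = α := by
  ext j; simp [pr, Finsupp.comapDomain_apply, Finsupp.cons_succ]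

lemma cons_pr {n : ℕ} (β : Fin (n + 1) →₀ ℕ) : Finsupp.cons (β 0) (pr β) = β := by
  ext i
  refine Fin.cases ?_ (fun j => ?_) i
  · simp [Finsupp.cons_zero]
  · simp [pr, Finsupp.cons_succ, Finsupp.comapDomain_apply]

namespace MvPolynomial

variable {n : ℕ}

section CommRing

variable {k : Type*} [CommRing k]

/-- The coefficient of `X₂^α₁ ⋯ Xₙ^αₙ₋₁` in `f`, as a polynomial in `X₁`. -/
noncomputable def tailCoeff (f : MvPolynomial (Fin (n + 1)) k) (α : Fin n →₀ ℕ) :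
    Polynomial k :=
  ⟨.ofCoeff <| Finsupp.comapDomain (Finsupp.cons · α) (AddMonoidAlgebra.coeff f)
    fun _ _ _ _ h => by simpa using congrArg (· 0) h⟩

@[simp]
lemma coeff_tailCoeff (f : MvPolynomial (Fin (n + 1)) k) (α : Fin n →₀ ℕ) (i : ℕ) :
    (tailCoeff f α).coeff i = f.coeff (Finsupp.cons i α) :=
  rfl

/-- `f(λ, X₂, …, Xₙ)`. -/
noncomputable def specializeFirst (f : MvPolynomial (Fin (n + 1)) k) (lam : k) :
    MvPolynomial (Fin n) k :=
  (finSuccEquiv k n f).eval (C lam)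

lemma eval_specializeFirst (f : MvPolynomial (Fin (n + 1)) k) (lam : k) (y : Fin n → k) :
    eval y (specializeFirst f lam) = eval (Fin.cons lam y) f := by
  rw [eval_eq_eval_mv_eval', Polynomial.eval_map, specializeFirst, ← Polynomial.eval₂_hom]
  simp

lemma coeff_specializeFirst (f : MvPolynomial (Fin (n + 1)) k) (lam : k) (α : Fin n →₀ ℕ) :
    (specializeFirst f lam).coeff α = (tailCoeff f α).eval lam := by
  set Q := finSuccEquiv k n f
  have hcoeff (i : ℕ) : (tailCoeff f α).coeff i = (Q.coeff i).coeff α := by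
    rw [coeff_tailCoeff, finSuccEquiv_coeff_coeff]
  have hdeg : (tailCoeff f α).natDegree < Q.natDegree + 1 := by
    refine Nat.lt_succ_of_le (Polynomial.natDegree_le_iff_coeff_eq_zero.mpr fun i hi => ?_)
    rw [hcoeff, Polynomial.coeff_eq_zero_of_natDegree_lt hi, coeff_zero]
  rw [specializeFirst, Polynomial.eval_eq_sum_range, Polynomial.eval_eq_sum_range' hdeg,
    coeff_sum]
  refine Finset.sum_congr rfl fun i _ => ?_
  rw [← C_pow, mul_comm, coeff_C_mul, hcoeff, mul_comm]

section ProductOrder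

variable {t : MonomialOrder (Fin (n + 1))} {tb : MonomialOrder (Fin n)}
  {f : MvPolynomial (Fin (n + 1)) k} {β : Fin (n + 1) →₀ ℕ}

lemma pr_lt_or_fst_lt_of_isLeadExp (hprod : IsProductOrder t tb) (hf : IsLeadExp t f β)
    {i : ℕ} {α : Fin n →₀ ℕ} (hi : f.coeff (α.cons i) ≠ 0) (hne : α.cons i ≠ β) :
    tb.toSyn α < tb.toSyn (pr β) ∨ (α = pr β ∧ i < β 0) := by
  have hlt := hprod (α.cons i) β
  rw [pr_cons, Finsupp.cons_zero] at hlt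
  exact hlt.mp (hf.2 _ (mem_support_iff.mpr hi) hne)

lemma tailCoeff_pr_ne_zero (hf : IsLeadExp t f β) : tailCoeff f (pr β) ≠ 0 := by
  intro h
  have hcoeff := congrArg (Polynomial.coeff · (β 0)) h
  simp only [coeff_tailCoeff, cons_pr, Polynomial.coeff_zero] at hcoeff
  exact mem_support_iff.mp hf.1 hcoeff

lemma natDegree_tailCoeff_pr_le (hprod : IsProductOrder t tb) (hf : IsLeadExp t f β) :
    (tailCoeff f (pr β)).natDegree ≤ β 0 := by
  refine Polynomial.natDegree_le_iff_coeff_eq_zero.mpr fun j hj => ?_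
  by_contra hj0
  have hne : (pr β).cons j ≠ β := fun h => by
    have := congrArg (· 0) h
    simp only [Finsupp.cons_zero] at this
    omega
  rcases pr_lt_or_fst_lt_of_isLeadExp hprod hf hj0 hne with h | ⟨-, h⟩
  · exact lt_irrefl _ h
  · omega

lemma isLeadExp_specializeFirst (hprod : IsProductOrder t tb) (hf : IsLeadExp t f β) {lam : k}
    (hlam : (tailCoeff f (pr β)).eval lam ≠ 0) :
    IsLeadExp tb (specializeFirst f lam) (pr β) := by
  refine ⟨by rwa [mem_support_iff, coeff_specializeFirst], fun α hα hne => ?_⟩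
  rw [mem_support_iff, coeff_specializeFirst] at hα
  have hα0 : tailCoeff f α ≠ 0 := fun h => hα (by rw [h, Polynomial.eval_zero])
  obtain ⟨i, hi⟩ := Polynomial.support_nonempty.mpr hα0
  rw [Polynomial.mem_support_iff, coeff_tailCoeff] at hi
  rcases pr_lt_or_fst_lt_of_isLeadExp hprod hf hi (fun h => hne (by rw [← h, pr_cons]))
    with h | ⟨h, -⟩
  · exact h
  · exact absurd h hne

end ProductOrder

end CommRing

lemma specializeFirst_mem_vanishingIdeal {k : Type*} [Field k] {A : Set (Fin (n + 1) → k)}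
    {f : MvPolynomial (Fin (n + 1)) k} (hf : f ∈ vanishingIdeal k A) (lam : k) :
    specializeFirst f lam ∈ vanishingIdeal k (fiberAt A lam) := by
  simp only [mem_vanishingIdeal_iff, aeval_eq_eval] at hf ⊢
  intro y hy
  rw [eval_specializeFirst]
  exact hf _ hy

end MvPolynomial

/-- Lower bound on the first coordinate of leading exponents: for a product order and any
variety `A ⊆ 𝔸ⁿ`, every `β ∈ C(A)` satisfies `β₁ ≥ #{λ ∈ k : p(β) ∈ D(A_λ)}` (in
particular this set is finite). -/
theorem first_coordinate_lower_bound {k : Type*} [Field k] {n : ℕ}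
    (t : MonomialOrder (Fin (n + 1))) (tb : MonomialOrder (Fin n))
    (hprod : IsProductOrder t tb)
    (A : Set (Fin (n + 1) → k))
    (β : Fin (n + 1) →₀ ℕ) (hβ : β ∈ expC t (MvPolynomial.vanishingIdeal k A)) :
    {lam : k | pr β ∈ expD tb (MvPolynomial.vanishingIdeal k (fiberAt A lam))}.Finite ∧
      {lam : k | pr β ∈ expD tb (MvPolynomial.vanishingIdeal k (fiberAt A lam))}.ncard ≤
        β 0 := by
  obtain ⟨f, hfA, hf⟩ := hβ
  set φ := tailCoeff f (pr β)
  have hφ : φ ≠ 0 := tailCoeff_pr_ne_zero hf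
  have hroots : {lam : k | pr β ∈ expD tb (vanishingIdeal k (fiberAt A lam))} ⊆
      {lam | φ.IsRoot lam} := fun lam hlam => by
    by_contra hroot
    exact hlam ⟨_, specializeFirst_mem_vanishingIdeal hfA lam,
      isLeadExp_specializeFirst hprod hf hroot⟩
  have hfin := Polynomial.finite_setOfPred_isRoot hφ
  exact ⟨hfin.subset hroots, (Set.ncard_le_ncard hroots hfin).trans <|
    (Polynomial.ncard_setOf_isRoot_le hφ).trans (natDegree_tailCoeff_pr_le hprod hf)⟩
end

section
/- Theorem (generic fiber inheritance): Let < be a product order on k[X₁,…,Xₙ] and let A ⊆ 𝔸ⁿ be a variety whose irreducible components are affine d-planes, each having X₁ among its minimal free variables. Suppose there is a nonempty Zariski-open U ⊆ 𝔸¹ and δ ∈ 𝔻_{n−1} with D(A_λ) = δ for all λ ∈ U. Then ℕe₁ ⊕ δ := {α ∈ ℕⁿ : p(α) ∈ δ} is contained in D(A), and it is the largest subset of D(A) that is a union of 1-planes γ + ℕe₁. -/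
open MvPolynomial

open scoped MonomialOrder Polynomial

/-!
Write `k[X₁,…,Xₙ]` as polynomials in `X₂,…,Xₙ` over `k[X₁]`, and for each exponent `ν` let
`L_ν ⊆ k[X₁]` be the ideal of `ν`-th coefficients of those elements of `I(A)` whose degree in the
last `n - 1` variables is at most `ν`. For a product order, the leading exponent of `F` is
`(deg g, ν)`, where `ν` is the degree of `F` in the last variables and `g ∈ L_ν` its coefficient
there. Hence `L_ν ≠ 0` exactly when some `(e, ν)` lies in `C(I(A))`, and `ℕe₁ ⊕ {ν | L_ν = 0}` is
the largest union of lines `γ + ℕe₁` inside `D(A)`.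

It remains to see that `δ = {ν | L_ν = 0}`, by choosing a good `λ ∈ U`. Outside finitely many `λ`:
* `I(A_λ)` is the specialisation of `I(A)` at `X₁ = λ`. For one plane this holds for every `λ`,
  since `X₁` is free and so a polynomial retraction onto the plane preserves `X₁`; specialisation
  commutes with the finite intersection `I(A) = ⋂ I(P_c)` as soon as `X₁ - λ` is a non-zero-divisor
  on a certain finitely generated module, which fails only at the roots of one polynomial.
* no nonzero `L_ν` vanishes at `λ` (Dickson's lemma leaves finitely many minimal `ν` to avoid),
  and then `ν` is a leading exponent of the specialised ideal iff `L_ν ≠ 0`.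
-/

section CoeffsInFirstVariable

variable (k : Type*) [CommSemiring k] (n : ℕ)

noncomputable def toPolyCoeffs :
    MvPolynomial (Fin (n + 1)) k ≃ₐ[k] MvPolynomial (Fin n) k[X] :=
  (renameEquiv k (_root_.finSuccEquiv n)).trans (optionEquivRight k (Fin n))

variable {k n}

@[simp] lemma toPolyCoeffs_X_zero : toPolyCoeffs k n (X 0) = C Polynomial.X := by
  simp [toPolyCoeffs]

@[simp] lemma toPolyCoeffs_X_succ (i : Fin n) : toPolyCoeffs k n (X i.succ) = X i := by
  simp [toPolyCoeffs]

@[simp] lemma toPolyCoeffs_C (a : k) : toPolyCoeffs k n (C a) = C (Polynomial.C a) := by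
  simp [toPolyCoeffs]

lemma toPolyCoeffs_monomial (α : Fin (n + 1) →₀ ℕ) (c : k) :
    toPolyCoeffs k n (monomial α c) = monomial α.tail (Polynomial.monomial (α 0) c) := by
  rw [monomial_eq, monomial_eq, Finsupp.prod_fintype _ _ fun _ => pow_zero _,
    Finsupp.prod_fintype _ _ fun _ => pow_zero _, Fin.prod_univ_succ,
    ← Polynomial.C_mul_X_pow_eq_monomial]
  simp only [map_mul, map_prod, map_pow, toPolyCoeffs_X_zero, toPolyCoeffs_X_succ,
    toPolyCoeffs_C, Finsupp.tail_apply]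
  ring

lemma coeff_coeff_toPolyCoeffs (F : MvPolynomial (Fin (n + 1)) k) (μ : Fin n →₀ ℕ) (e : ℕ) :
    ((toPolyCoeffs k n F).coeff μ).coeff e = F.coeff (Finsupp.cons e μ) := by
  induction F using MvPolynomial.induction_on' with
  | monomial α c =>
    have hα : α = Finsupp.cons e μ ↔ α 0 = e ∧ α.tail = μ := by
      rw [← Finsupp.cons_tail α, Finsupp.cons_injective2.eq_iff, Finsupp.cons_zero,
        Finsupp.tail_cons]
    rw [toPolyCoeffs_monomial, coeff_monomial, coeff_monomial]
    by_cases h : α.tail = μ <;> simp [h, hα, Polynomial.coeff_monomial]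
  | add p q hp hq => simp [hp, hq]

end CoeffsInFirstVariable

section Specialization

variable {k : Type*} [CommRing k] {n : ℕ}

noncomputable def evalCoeffs {σ : Type*} (a : k) : MvPolynomial σ k[X] →+* MvPolynomial σ k :=
  map (Polynomial.evalRingHom a)

noncomputable def substFirst (a : k) : MvPolynomial (Fin (n + 1)) k →+* MvPolynomial (Fin n) k :=
  (evalCoeffs a).comp (toPolyCoeffs k n).toRingHom

lemma substFirst_apply (a : k) (F : MvPolynomial (Fin (n + 1)) k) :
    substFirst a F = evalCoeffs a (toPolyCoeffs k n F) := rfl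

lemma coeff_evalCoeffs {σ : Type*} (a : k) (G : MvPolynomial σ k[X]) (μ : σ →₀ ℕ) :
    (evalCoeffs a G).coeff μ = (G.coeff μ).eval a :=
  coeff_map _ _ _

lemma support_evalCoeffs_subset {σ : Type*} (a : k) (G : MvPolynomial σ k[X]) :
    (evalCoeffs a G).support ⊆ G.support :=
  support_map_subset _ _

lemma evalCoeffs_surjective {σ : Type*} (a : k) : Function.Surjective (evalCoeffs (σ := σ) a) :=
  map_surjective _ fun b => ⟨Polynomial.C b, Polynomial.eval_C⟩

lemma substFirst_surjective (a : k) : Function.Surjective (substFirst (n := n) a) :=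
  (evalCoeffs_surjective a).comp (toPolyCoeffs k n).surjective

lemma eval_substFirst (a : k) (y : Fin n → k) (F : MvPolynomial (Fin (n + 1)) k) :
    eval y (substFirst a F) = eval (Fin.cons a y) F := by
  have h : (eval y).comp (substFirst a) = eval (Fin.cons a y) := by
    ext i
    · simp [substFirst_apply, evalCoeffs]
    · refine Fin.cases ?_ (fun j => ?_) i <;> simp [substFirst_apply, evalCoeffs]
  exact RingHom.congr_fun h F

lemma substFirst_rename_succ (a : k) (f : MvPolynomial (Fin n) k) :
    substFirst a (rename Fin.succ f) = f := by
  have h : (substFirst a).comp (rename Fin.succ).toRingHom =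
      RingHom.id (MvPolynomial (Fin n) k) := by
    ext i <;> simp [substFirst_apply, evalCoeffs]
  exact RingHom.congr_fun h f

lemma ker_substFirst (a : k) :
    RingHom.ker (substFirst (n := n) a) = Ideal.span {X 0 - C a} := by
  rw [substFirst, ← RingHom.comap_ker, evalCoeffs, MvPolynomial.ker_map,
    Polynomial.ker_evalRingHom, Ideal.map_span, Set.image_singleton]
  have h : C (Polynomial.X - Polynomial.C a) = toPolyCoeffs k n (X 0 - C a) := by simp
  rw [h, ← Set.image_singleton, ← Ideal.map_span]
  exact Ideal.comap_map_of_bijective _ (toPolyCoeffs k n).bijective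

lemma map_substFirst_eq (a : k) (I : Ideal (MvPolynomial (Fin (n + 1)) k)) :
    I.map (substFirst a) = (I.map (toPolyCoeffs k n)).map (evalCoeffs a) := by
  rw [substFirst, ← Ideal.map_map]
  rfl

end Specialization

section Fibers

variable {k : Type*} [Field k] {n : ℕ}

lemma map_substFirst_vanishingIdeal_le (a : k) (A : Set (Fin (n + 1) → k)) :
    (vanishingIdeal k A).map (substFirst a) ≤ vanishingIdeal k (fiberAt A a) := by
  rw [Ideal.map_le_iff_le_comap]
  intro F hF y hy
  rw [aeval_eq_eval, eval_substFirst, ← aeval_eq_eval]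
  exact hF _ hy

lemma vanishingIdeal_iUnion {σ ι : Type*} (V : ι → Set (σ → k)) :
    vanishingIdeal k (⋃ i, V i) = ⨅ i, vanishingIdeal k (V i) := by
  ext f
  simp only [mem_vanishingIdeal_iff, Set.mem_iUnion, Submodule.mem_iInf]
  grind

omit [Field k] in
lemma fiberAt_iUnion {ι : Type*} (V : ι → Set (Fin (n + 1) → k)) (a : k) :
    fiberAt (⋃ i, V i) a = ⋃ i, fiberAt (V i) a := by
  ext
  simp [fiberAt]

lemma IsFreeVars.exists_retraction {ι : Type*} [DecidableEq ι] {S : AffineSubspace k (ι → k)}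
    {J : Finset ι} (hne : (S : Set (ι → k)).Nonempty) (hJ : IsFreeVars (S : Set (ι → k)) J) :
    ∃ q : ι → MvPolynomial ι k, (∀ v, (fun i => eval v (q i)) ∈ S) ∧
      (∀ x ∈ S, (fun i => eval x (q i)) = x) ∧ ∀ v, ∀ j ∈ J, eval v (q j) = v j := by
  obtain ⟨p, hp⟩ := hne
  choose x hxS hxJ using fun j => (hJ (p + Pi.single j 1)).exists
  set w : ι → ι → k := fun j => x j - p
  have hw : ∀ j, ∀ j' ∈ J, w j j' = (Pi.single j 1 : ι → k) j' := fun j j' hj' => by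
    simp [w, hxJ j j' hj']
  let q : ι → MvPolynomial ι k := fun i => C (p i) + ∑ j ∈ J, (X j - C (p j)) * C (w j i)
  have hq : ∀ v, (fun i => eval v (q i)) = (∑ j ∈ J, (v j - p j) • w j) +ᵥ p := fun v => by
    ext i
    simp [q, Finset.sum_apply, add_comm]
  have hqS : ∀ v, (fun i => eval v (q i)) ∈ S := fun v => by
    rw [hq]
    refine AffineSubspace.vadd_mem_of_mem_direction
      (Submodule.sum_mem _ fun j _ => Submodule.smul_mem _ _ ?_) hp
    exact AffineSubspace.vsub_mem_direction (hxS j) hp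
  have hqJ : ∀ v, ∀ j ∈ J, eval v (q j) = v j := fun v j hj => by
    calc eval v (q j) = p j + ∑ i ∈ J, (v i - p i) * w i j := by simp [q]
      _ = v j := by
        rw [Finset.sum_congr rfl fun i _ => by rw [hw i j hj]]
        simp [Pi.single_apply, hj]
  exact ⟨q, hqS, fun y hy => (hJ y).unique ⟨hqS y, hqJ y⟩ ⟨hy, fun _ _ => rfl⟩, hqJ⟩

variable [Infinite k]

lemma vanishingIdeal_fiberAt_eq_map_of_retraction {A : Set (Fin (n + 1) → k)}
    (q : Fin (n + 1) → MvPolynomial (Fin (n + 1)) k) (hqA : ∀ v, (fun i => eval v (q i)) ∈ A)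
    (hqfix : ∀ x ∈ A, (fun i => eval x (q i)) = x) (hq0 : ∀ v, eval v (q 0) = v 0) (a : k) :
    vanishingIdeal k (fiberAt A a) = (vanishingIdeal k A).map (substFirst a) := by
  refine le_antisymm (fun f hf => ?_) (map_substFirst_vanishingIdeal_le a A)
  set F := rename Fin.succ f
  have eval_bind₁_q : ∀ v, eval v (bind₁ q F) = eval (fun i => eval v (q i)) F := fun v => by
    simpa using aeval_bind₁ v q F
  have hmem : F - bind₁ q F ∈ vanishingIdeal k A := fun x hx => by
    simp [eval_bind₁_q, hqfix x hx]
  have hzero : substFirst a (bind₁ q F) = 0 := MvPolynomial.funext fun y => by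
    have hfiber : Fin.tail (fun i => eval (Fin.cons a y) (q i)) ∈ fiberAt A a := by
      change Fin.cons a _ ∈ A
      convert hqA (Fin.cons a y) using 1
      conv_rhs => rw [← Fin.cons_self_tail fun i => eval (Fin.cons a y) (q i)]
      simp [hq0]
    simp only [eval_substFirst, eval_bind₁_q, F, eval_rename, map_zero]
    exact hf _ hfiber
  rw [← substFirst_rename_succ a f, ← sub_zero (substFirst a F), ← hzero, ← map_sub]
  exact Ideal.mem_map_of_mem _ hmem

lemma IsFreeVars.vanishingIdeal_fiberAt_eq_map {S : AffineSubspace k (Fin (n + 1) → k)}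
    {J : Finset (Fin (n + 1))} (hJ : IsFreeVars (S : Set (Fin (n + 1) → k)) J)
    (hne : (S : Set (Fin (n + 1) → k)).Nonempty) (h0 : 0 ∈ J) (a : k) :
    vanishingIdeal k (fiberAt (S : Set (Fin (n + 1) → k)) a) =
      (vanishingIdeal k (S : Set (Fin (n + 1) → k))).map (substFirst a) := by
  obtain ⟨q, hqS, hqfix, hqJ⟩ := hJ.exists_retraction hne
  exact vanishingIdeal_fiberAt_eq_map_of_retraction q hqS hqfix (fun v => hqJ v 0 h0) a

end Fibers

section GenericIntersection

variable {k R : Type*} [Field k] [CommRing R] [Algebra k R]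

/-- Take `g` with `ker (g(x) • ·)` maximal among such kernels (noetherianity): it then contains
every `ker (h(x) • ·)`, in particular `ker ((x - a) • ·)`, while `g(x) ≡ g(a)` modulo `x - a`. -/
lemma exists_ne_zero_isSMulRegular_sub_algebraMap {M : Type*} [AddCommGroup M] [Module R M]
    [IsNoetherian R M] (x : R) :
    ∃ g : k[X], g ≠ 0 ∧ ∀ a : k, g.eval a ≠ 0 → IsSMulRegular M (x - algebraMap k R a) := by
  obtain ⟨_, ⟨g, hg, rfl⟩, hmax⟩ := exists_maximal_of_wellFoundedGT
    (fun N : Submodule R M =>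
      ∃ g : k[X], g ≠ 0 ∧ N = Submodule.torsionBy R M (Polynomial.aeval x g))
    ⟨_, 1, one_ne_zero, rfl⟩
  refine ⟨g, hg, fun a ha => IsSMulRegular.of_right_eq_zero_of_smul fun m hm => ?_⟩
  have hgm : Polynomial.aeval x g • m = 0 := by
    refine (Submodule.mem_torsionBy_iff _ _).mp
      (hmax ⟨_, mul_ne_zero hg (Polynomial.X_sub_C_ne_zero a), rfl⟩ (fun m' hm' => ?_)
        ((Submodule.mem_torsionBy_iff _ _).mpr ?_))
    · rw [Submodule.mem_torsionBy_iff] at hm' ⊢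
      rw [map_mul, mul_smul, smul_comm, hm', smul_zero]
    · simp [mul_smul, hm]
  obtain ⟨u, hu⟩ := Polynomial.X_sub_C_dvd_sub_C_eval (a := a) (p := g)
  have hsplit : Polynomial.aeval x g =
      (x - algebraMap k R a) * Polynomial.aeval x u + algebraMap k R (g.eval a) := by
    have := congrArg (Polynomial.aeval x) hu
    simp only [map_sub, map_mul, Polynomial.aeval_X, Polynomial.aeval_C] at this
    linear_combination this
  have hcm : algebraMap k R (g.eval a) • m = 0 := by
    rw [hsplit, add_smul, mul_comm, mul_smul, hm, smul_zero, zero_add] at hgm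
    exact hgm
  rw [← one_smul R m, ← map_one (algebraMap k R), ← inv_mul_cancel₀ ha, map_mul, mul_smul, hcm,
    smul_zero]

/-- An element of the left side is `f = fᵢ + bᵢ (x - a)` with `fᵢ ∈ I i`; then `(x - a) • b`
lies in `W = R·(1, …, 1) + ∏ I i`, and regularity of `x - a` on `(ι → R) ⧸ W` puts `b` itself in
`W`, which is what is needed to write `f` with a single multiplier of `x - a`. -/
lemma exists_finite_iInf_sup_span_le [IsNoetherianRing R] {ι : Type*} [Finite ι]
    (I : ι → Ideal R) (x : R) :
    ∃ B : Set k, B.Finite ∧ ∀ a ∉ B,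
      ⨅ i, (I i ⊔ Ideal.span {x - algebraMap k R a}) ≤
        (⨅ i, I i) ⊔ Ideal.span {x - algebraMap k R a} := by
  let W : Submodule R (ι → R) :=
    LinearMap.range (LinearMap.pi fun _ => LinearMap.id) ⊔ Submodule.pi Set.univ fun i => I i
  obtain ⟨g, hg, hreg⟩ :=
    exists_ne_zero_isSMulRegular_sub_algebraMap (k := k) (M := (ι → R) ⧸ W) x
  refine ⟨{a | g.IsRoot a}, Polynomial.finite_setOfPred_isRoot hg, fun a ha f hf => ?_⟩
  set y := x - algebraMap k R a
  have hb : ∀ i, ∃ b, f - b * y ∈ I i := fun i => by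
    obtain ⟨u, hu, v, hv, rfl⟩ := Submodule.mem_sup.mp (Ideal.mem_iInf.mp hf i)
    obtain ⟨b, rfl⟩ := Ideal.mem_span_singleton'.mp hv
    exact ⟨b, by simpa [y] using hu⟩
  choose b hb using hb
  have hbW : b ∈ W := by
    rw [← Submodule.Quotient.mk_eq_zero]
    refine (hreg a ha).right_eq_zero_of_smul ?_
    rw [← Submodule.Quotient.mk_smul, Submodule.Quotient.mk_eq_zero]
    refine Submodule.mem_sup.mpr ⟨fun _ => f, ⟨f, rfl⟩, fun i => -(f - b i * y),
      fun i _ => neg_mem (hb i), ?_⟩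
    ext i
    simp [y, mul_comm]
  obtain ⟨_, ⟨s, rfl⟩, c, hc, hbsc⟩ := Submodule.mem_sup.mp hbW
  refine Submodule.mem_sup.mpr ⟨f - s * y, Ideal.mem_iInf.mpr fun i => ?_, s * y,
    Ideal.mul_mem_left _ _ (Ideal.mem_span_singleton_self y), sub_add_cancel f _⟩
  have hbi : b i = s + c i := by rw [← hbsc]; rfl
  have : f - s * y = (f - b i * y) + c i * y := by rw [hbi]; ring
  rw [this]
  exact Ideal.add_mem _ (hb i) (Ideal.mul_mem_right _ _ (hc i (Set.mem_univ i)))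

end GenericIntersection

section FiniteUnions

variable {k : Type*} [Field k] {n : ℕ}

lemma exists_finite_iInf_map_substFirst_le {ι : Type*} [Finite ι]
    (I : ι → Ideal (MvPolynomial (Fin (n + 1)) k)) :
    ∃ B : Set k, B.Finite ∧ ∀ a ∉ B,
      ⨅ i, (I i).map (substFirst a) ≤ (⨅ i, I i).map (substFirst (n := n) a) := by
  obtain ⟨B, hB, hI⟩ := exists_finite_iInf_sup_span_le (k := k) I (X 0)
  refine ⟨B, hB, fun a ha => ?_⟩
  set φ := substFirst (k := k) (n := n) a
  have hsurj : Function.Surjective φ := substFirst_surjective a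
  have hcomap : (⨅ i, (I i).map φ).comap φ ≤ ((⨅ i, I i).map φ).comap φ := by
    have hker : RingHom.ker φ = Ideal.span {X 0 - algebraMap k _ a} := ker_substFirst a
    simp only [Ideal.comap_iInf, Ideal.comap_map_of_surjective _ hsurj,
      ← RingHom.ker_eq_comap_bot, hker]
    exact hI a ha
  calc ⨅ i, (I i).map φ = ((⨅ i, (I i).map φ).comap φ).map φ :=
        (Ideal.map_comap_of_surjective _ hsurj _).symm
    _ ≤ (((⨅ i, I i).map φ).comap φ).map φ := Ideal.map_mono hcomap
    _ = (⨅ i, I i).map φ := Ideal.map_comap_of_surjective _ hsurj _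

lemma exists_finite_vanishingIdeal_fiberAt_iUnion {ι : Type*} [Finite ι]
    (V : ι → Set (Fin (n + 1) → k))
    (hV : ∀ i a,
      vanishingIdeal k (fiberAt (V i) a) = (vanishingIdeal k (V i)).map (substFirst a)) :
    ∃ B : Set k, B.Finite ∧ ∀ a ∉ B, vanishingIdeal k (fiberAt (⋃ i, V i) a) =
      (vanishingIdeal k (⋃ i, V i)).map (substFirst a) := by
  obtain ⟨B, hB, hV'⟩ := exists_finite_iInf_map_substFirst_le fun i => vanishingIdeal k (V i)
  refine ⟨B, hB, fun a ha => le_antisymm ?_ (map_substFirst_vanishingIdeal_le a _)⟩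
  rw [fiberAt_iUnion, vanishingIdeal_iUnion, vanishingIdeal_iUnion]
  simp only [hV]
  exact hV' a ha

end FiniteUnions

section LeadingExponents

variable {σ R : Type*} [CommSemiring R] {m : MonomialOrder σ}

lemma isLeadExp_iff {f : MvPolynomial σ R} {β : σ →₀ ℕ} :
    IsLeadExp m f β ↔ f ≠ 0 ∧ m.degree f = β := by
  constructor
  · rintro ⟨hβ, hlt⟩
    have hf : f ≠ 0 := by rintro rfl; simp at hβ
    refine ⟨hf, by_contra fun hne => ?_⟩
    exact (hlt _ (m.degree_mem_support hf) hne).not_ge (m.le_degree hβ)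
  · rintro ⟨hf, rfl⟩
    exact ⟨m.degree_mem_support hf, fun α hα hne =>
      (m.le_degree hα).lt_of_ne fun h => hne (m.toSyn.injective h)⟩

lemma mem_expC_iff {I : Ideal (MvPolynomial σ R)} {β : σ →₀ ℕ} :
    β ∈ expC m I ↔ ∃ f ∈ I, f ≠ 0 ∧ m.degree f = β := by
  simp only [expC, Set.mem_ofPred_eq, isLeadExp_iff]

lemma MonomialOrder.degree_eq_of_le_of_coeff_ne_zero {f : MvPolynomial σ R} {ν : σ →₀ ℕ}
    (hle : m.degree f ≼[m] ν) (hν : f.coeff ν ≠ 0) : m.degree f = ν :=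
  m.toSyn.injective (hle.antisymm (m.le_degree (mem_support_iff.mpr hν)))

lemma mem_expC_of_le {k : Type*} [Field k] {I : Ideal (MvPolynomial σ k)} {β β' : σ →₀ ℕ}
    (hβ : β ∈ expC m I) (h : β ≤ β') : β' ∈ expC m I := by
  classical
  obtain ⟨f, hf, hf0, rfl⟩ := mem_expC_iff.mp hβ
  refine mem_expC_iff.mpr ⟨monomial (β' - m.degree f) 1 * f, I.mul_mem_left _ hf,
    mul_ne_zero (by simp) hf0, ?_⟩
  rw [m.degree_mul (by simp) hf0, m.degree_monomial, if_neg one_ne_zero,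
    tsub_add_cancel_of_le h]

end LeadingExponents

section LeadCoeffIdeals

variable {σ K : Type*} [Field K] (m : MonomialOrder σ) (J : Ideal (MvPolynomial σ K[X]))

noncomputable def leadCoeffIdeal (ν : σ →₀ ℕ) : Ideal K[X] where
  carrier := {g | ∃ G ∈ J, m.degree G ≼[m] ν ∧ G.coeff ν = g}
  add_mem' := by
    rintro _ _ ⟨G, hG, hGν, rfl⟩ ⟨G', hG', hG'ν, rfl⟩
    exact ⟨G + G', J.add_mem hG hG', m.degree_add_le.trans (sup_le hGν hG'ν), coeff_add _ _ _⟩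
  zero_mem' := ⟨0, J.zero_mem, by simp [m.degree_zero, m.zero_le], coeff_zero _⟩
  smul_mem' := by
    rintro c _ ⟨G, hG, hGν, rfl⟩
    exact ⟨c • G, J.smul_of_tower_mem c hG, m.degree_smul_le.trans hGν, coeff_smul _ _ _⟩

def LeadCoeffsNonvanishing (a : K) : Prop :=
  ∀ ν, leadCoeffIdeal m J ν ≠ ⊥ → ∃ h ∈ leadCoeffIdeal m J ν, h.eval a ≠ 0

variable {m J}

lemma coeff_mem_leadCoeffIdeal {G : MvPolynomial σ K[X]} (hG : G ∈ J) {ν : σ →₀ ℕ}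
    (hν : m.degree G ≼[m] ν) : G.coeff ν ∈ leadCoeffIdeal m J ν :=
  ⟨G, hG, hν, rfl⟩

lemma leadCoeffIdeal_mono {ν ν' : σ →₀ ℕ} (h : ν ≤ ν') :
    leadCoeffIdeal m J ν ≤ leadCoeffIdeal m J ν' := by
  classical
  rintro _ ⟨G, hG, hGν, rfl⟩
  refine ⟨monomial (ν' - ν) 1 * G, J.mul_mem_left _ hG, ?_, ?_⟩
  · calc m.toSyn (m.degree (monomial (ν' - ν) 1 * G))
        ≤ m.toSyn (m.degree (monomial (ν' - ν) (1 : K[X]))) + m.toSyn (m.degree G) := by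
          rw [← map_add]; exact m.degree_mul_le
      _ ≤ m.toSyn (ν' - ν) + m.toSyn ν := add_le_add (m.degree_monomial_le 1) hGν
      _ = m.toSyn ν' := by rw [← map_add, tsub_add_cancel_of_le h]
  · have := coeff_monomial_mul ν (ν' - ν) (1 : K[X]) G
    rwa [tsub_add_cancel_of_le h, one_mul] at this

variable (m J) in
lemma finite_setOf_not_leadCoeffsNonvanishing [Finite σ] :
    {a | ¬ LeadCoeffsNonvanishing m J a}.Finite := by
  set M := {ν | Minimal (fun μ => leadCoeffIdeal m J μ ≠ ⊥) ν}
  have hM : M.Finite := (setOfPred_minimal_antichain _).finite_of_partiallyWellOrderedOn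
    (Set.isPWO_of_wellQuasiOrderedLE M)
  choose h hmem hne using fun (μ : σ →₀ ℕ) (hμ : μ ∈ M) =>
    Submodule.exists_mem_ne_zero_of_ne_bot hμ.1
  refine (hM.biUnion' fun μ hμ => Polynomial.finite_setOfPred_isRoot (hne μ hμ)).subset ?_
  intro a ha
  simp only [LeadCoeffsNonvanishing, not_forall, not_exists, not_and, not_not, exists_prop] at ha
  obtain ⟨ν, hν, hroot⟩ := ha
  obtain ⟨μ, hμν, hμ⟩ :=
    exists_minimal_le_of_wellFoundedLT (fun μ => leadCoeffIdeal m J μ ≠ ⊥) ν hν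
  exact Set.mem_iUnion₂.mpr ⟨μ, hμ, hroot _ (leadCoeffIdeal_mono hμν (hmem μ hμ))⟩

/-- With `g = G.coeff d` and `h = H.coeff d`, `h(a)⁻¹ (h G - g H)` has no `d`-th coefficient, and
it specialises like `G` because `g(a) = 0`. -/
lemma LeadCoeffsNonvanishing.exists_lift_coeff_eq_zero {a : K}
    (ha : LeadCoeffsNonvanishing m J a) {G : MvPolynomial σ K[X]} (hG : G ∈ J) {d : σ →₀ ℕ}
    (hd : m.degree G ≼[m] d) (hGd : (G.coeff d).eval a = 0) :
    ∃ G' ∈ J, evalCoeffs a G' = evalCoeffs a G ∧ m.degree G' ≼[m] d ∧ G'.coeff d = 0 := by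
  by_cases hL : leadCoeffIdeal m J d = ⊥
  · exact ⟨G, hG, rfl, hd, (Submodule.mem_bot _).mp (hL ▸ coeff_mem_leadCoeffIdeal hG hd)⟩
  obtain ⟨_, ⟨H, hH, hHd, rfl⟩, hHa⟩ := ha d hL
  set c := ((H.coeff d).eval a)⁻¹
  refine ⟨(Polynomial.C c * H.coeff d) • G - (Polynomial.C c * G.coeff d) • H,
    J.sub_mem (J.smul_of_tower_mem _ hG) (J.smul_of_tower_mem _ hH), ?_,
    m.degree_sub_le.trans (sup_le (m.degree_smul_le.trans hd) (m.degree_smul_le.trans hHd)), ?_⟩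
  · simp only [evalCoeffs, smul_eq_C_mul, map_sub, map_mul, map_C, Polynomial.coe_evalRingHom,
      Polynomial.eval_C, hGd, mul_zero, C_0, zero_mul, sub_zero, c]
    rw [← C_mul, inv_mul_cancel₀ hHa, C_1, one_mul]
  · simp only [coeff_sub, coeff_smul, smul_eq_mul]
    ring

lemma LeadCoeffsNonvanishing.mem_expC_map_evalCoeffs_iff {a : K}
    (ha : LeadCoeffsNonvanishing m J a) {ν : σ →₀ ℕ} :
    ν ∈ expC m (J.map (evalCoeffs a)) ↔ leadCoeffIdeal m J ν ≠ ⊥ := by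
  constructor
  · intro hν
    obtain ⟨f, hf, hf0, rfl⟩ := mem_expC_iff.mp hν
    obtain ⟨G, ⟨hG, rfl⟩, hmin⟩ := exists_minimalFor_of_wellFoundedLT
      (fun G => G ∈ J ∧ evalCoeffs a G = f) (fun G => m.toSyn (m.degree G))
      ((Ideal.mem_map_iff_of_surjective _ (evalCoeffs_surjective a)).mp hf)
    have hGle : m.degree G ≼[m] m.degree (evalCoeffs a G) := by
      by_contra! hlt
      obtain ⟨G', hG', hG'f, hG'le, hG'd⟩ := ha.exists_lift_coeff_eq_zero hG le_rfl
        (by rw [← coeff_evalCoeffs, m.coeff_eq_zero_of_lt hlt])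
      have hG'0 : G' ≠ 0 := by rintro rfl; exact hf0 (by simp [← hG'f])
      have hlt' : m.degree G' ≺[m] m.degree G := hG'le.lt_of_ne fun h =>
        m.coeff_degree_ne_zero_iff.mpr hG'0 (m.toSyn.injective h ▸ hG'd)
      exact hlt'.not_ge (hmin ⟨hG', hG'f⟩ hlt'.le)
    intro hbot
    have hGcoeff := coeff_mem_leadCoeffIdeal hG hGle
    rw [hbot, Submodule.mem_bot] at hGcoeff
    apply m.coeff_degree_ne_zero_iff.mpr hf0
    rw [coeff_evalCoeffs, hGcoeff, Polynomial.eval_zero]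
  · intro hν
    obtain ⟨_, ⟨G, hG, hGν, rfl⟩, hGa⟩ := ha ν hν
    have hcoeff : (evalCoeffs a G).coeff ν ≠ 0 := by rwa [coeff_evalCoeffs]
    have hle : m.degree (evalCoeffs a G) ≼[m] ν :=
      m.degree_le_iff.mpr fun c hc => (m.le_degree (support_evalCoeffs_subset a G hc)).trans hGν
    refine mem_expC_iff.mpr ⟨evalCoeffs a G, Ideal.mem_map_of_mem _ hG, ?_,
      m.degree_eq_of_le_of_coeff_ne_zero hle hcoeff⟩
    rintro h
    rw [h, coeff_zero] at hcoeff
    exact hcoeff rfl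

end LeadCoeffIdeals

section ProductOrder

lemma pr_eq_tail {n : ℕ} (β : Fin (n + 1) →₀ ℕ) : pr β = β.tail := by
  ext; rfl

lemma Finsupp.cons_tail_le_add_single {n : ℕ} (γ : Fin (n + 1) →₀ ℕ) (e : ℕ) :
    Finsupp.cons e γ.tail ≤ γ + Finsupp.single 0 e := by
  intro i
  refine Fin.cases ?_ (fun j => ?_) i <;> simp [Finsupp.tail_apply]

variable {k : Type*} [Field k] {n : ℕ} {t : MonomialOrder (Fin (n + 1))}
  {tb : MonomialOrder (Fin n)}

lemma IsProductOrder.le_iff (hprod : IsProductOrder t tb) {α β : Fin (n + 1) →₀ ℕ} :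
    α ≼[t] β ↔ α.tail ≺[tb] β.tail ∨ (α.tail = β.tail ∧ α 0 ≤ β 0) := by
  have heq : α = β ↔ α 0 = β 0 ∧ α.tail = β.tail := by
    rw [← Finsupp.cons_tail α, ← Finsupp.cons_tail β, Finsupp.cons_injective2.eq_iff]
    simp
  rw [le_iff_lt_or_eq, hprod, t.toSyn.injective.eq_iff, heq, pr_eq_tail, pr_eq_tail]
  constructor
  · rintro ((h | ⟨h, h'⟩) | ⟨h', h⟩)
    exacts [Or.inl h, Or.inr ⟨h, h'.le⟩, Or.inr ⟨h, h'.le⟩]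
  · rintro (h | ⟨h, h'⟩)
    exacts [Or.inl (Or.inl h), h'.lt_or_eq.imp (fun h' => Or.inr ⟨h, h'⟩) fun h' => ⟨h', h⟩]

lemma IsProductOrder.degree_eq_cons (hprod : IsProductOrder t tb)
    (F : MvPolynomial (Fin (n + 1)) k) :
    t.degree F = Finsupp.cons (tb.leadingCoeff (toPolyCoeffs k n F)).natDegree
      (tb.degree (toPolyCoeffs k n F)) := by
  rcases eq_or_ne F 0 with rfl | hF
  · simp [t.degree_zero, tb.degree_zero]
  set G := toPolyCoeffs k n F
  set β := Finsupp.cons (tb.leadingCoeff G).natDegree (tb.degree G)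
  have hG : G ≠ 0 := by simpa [G] using hF
  have hβ : β ∈ F.support := by
    rw [mem_support_iff, ← coeff_coeff_toPolyCoeffs]
    exact Polynomial.leadingCoeff_ne_zero.mpr (tb.leadingCoeff_ne_zero_iff.mpr hG)
  have hle : ∀ α ∈ F.support, α ≼[t] β := by
    intro α hα
    have hαG : (G.coeff α.tail).coeff (α 0) ≠ 0 := by
      rwa [coeff_coeff_toPolyCoeffs, Finsupp.cons_tail, ← mem_support_iff]
    have htail : α.tail ∈ G.support :=
      mem_support_iff.mpr fun h => hαG (by rw [h, Polynomial.coeff_zero])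
    rw [hprod.le_iff, Finsupp.tail_cons, Finsupp.cons_zero]
    rcases (tb.le_degree htail).lt_or_eq with h | h
    · exact Or.inl h
    · have h := tb.toSyn.injective h
      rw [h] at hαG
      exact Or.inr ⟨h, Polynomial.le_natDegree_of_ne_zero hαG⟩
  exact t.toSyn.injective ((t.degree_le_iff.mpr hle).antisymm (t.le_degree hβ))

lemma IsProductOrder.leadCoeffIdeal_ne_bot_of_mem_expC (hprod : IsProductOrder t tb)
    {I : Ideal (MvPolynomial (Fin (n + 1)) k)} {β : Fin (n + 1) →₀ ℕ} (hβ : β ∈ expC t I) :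
    leadCoeffIdeal tb (I.map (toPolyCoeffs k n)) β.tail ≠ ⊥ := by
  obtain ⟨F, hF, hF0, rfl⟩ := mem_expC_iff.mp hβ
  rw [hprod.degree_eq_cons, Finsupp.tail_cons, Submodule.ne_bot_iff]
  exact ⟨_, coeff_mem_leadCoeffIdeal (Ideal.mem_map_of_mem _ hF) le_rfl,
    tb.leadingCoeff_ne_zero_iff.mpr (by simpa using hF0)⟩

lemma IsProductOrder.exists_cons_mem_expC_of_leadCoeffIdeal_ne_bot
    (hprod : IsProductOrder t tb) {I : Ideal (MvPolynomial (Fin (n + 1)) k)} {ν : Fin n →₀ ℕ}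
    (hν : leadCoeffIdeal tb (I.map (toPolyCoeffs k n)) ν ≠ ⊥) :
    ∃ e, Finsupp.cons e ν ∈ expC t I := by
  obtain ⟨_, ⟨G, hG, hGν, rfl⟩, hG0⟩ := Submodule.exists_mem_ne_zero_of_ne_bot hν
  obtain ⟨F, hF, rfl⟩ := (Ideal.mem_map_of_equiv _ _).mp hG
  refine ⟨(tb.leadingCoeff (toPolyCoeffs k n F)).natDegree,
    mem_expC_iff.mpr ⟨F, hF, fun h => hG0 (by simp [h]), ?_⟩⟩
  rw [hprod.degree_eq_cons, tb.degree_eq_of_le_of_coeff_ne_zero hGν hG0]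

end ProductOrder

theorem generic_fiber_inheritance_general {k : Type*} [Field k] [Infinite k] {n d mm : ℕ}
    (t : MonomialOrder (Fin (n + 1))) (tb : MonomialOrder (Fin n))
    (hprod : IsProductOrder t tb)
    (P : Fin mm → Set (Fin (n + 1) → k)) (Jc : Fin mm → Finset (Fin (n + 1)))
    (hP : ∀ c, IsAffineDPlane d (P c) ∧ (Jc c).card = d ∧ IsMinFreeVars (P c) (Jc c) ∧
      (0 : Fin (n + 1)) ∈ Jc c)
    (A : Set (Fin (n + 1) → k)) (hA : A = ⋃ c, P c)
    (U : Set k) (hUopen : Uᶜ.Finite)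
    (δ : Set (Fin n →₀ ℕ))
    (hδ : ∀ lam ∈ U, expD tb (MvPolynomial.vanishingIdeal k (fiberAt A lam)) = δ) :
    {β : Fin (n + 1) →₀ ℕ | pr β ∈ δ} ⊆ expD t (MvPolynomial.vanishingIdeal k A) ∧
      ∀ γ : Fin (n + 1) →₀ ℕ,
        (∀ c : ℕ, γ + Finsupp.single 0 c ∈ expD t (MvPolynomial.vanishingIdeal k A)) →
        pr γ ∈ δ := by
  subst hA
  set J := (vanishingIdeal k (⋃ c, P c)).map (toPolyCoeffs k n)
  have hplanes : ∀ c a,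
      vanishingIdeal k (fiberAt (P c) a) = (vanishingIdeal k (P c)).map (substFirst a) := by
    intro c a
    obtain ⟨⟨S, hS, hne, -⟩, -, ⟨hfree, -⟩, h0⟩ := hP c
    rw [hS] at hne hfree ⊢
    exact hfree.vanishingIdeal_fiberAt_eq_map hne h0 a
  obtain ⟨B, hB, hfib⟩ := exists_finite_vanishingIdeal_fiberAt_iUnion P hplanes
  obtain ⟨a, haU, haB, hgood⟩ : ∃ a ∈ U, a ∉ B ∧ LeadCoeffsNonvanishing tb J a := by
    obtain ⟨a, ha⟩ := (hUopen.union (hB.union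
      (finite_setOf_not_leadCoeffsNonvanishing tb J))).infinite_compl.nonempty
    simp only [Set.mem_compl_iff, Set.mem_union, not_or, not_not, Set.mem_ofPred_eq] at ha
    exact ⟨a, ha.1, ha.2.1, ha.2.2⟩
  have hδJ : δ = {ν | leadCoeffIdeal tb J ν = ⊥} := by
    ext ν
    rw [← hδ a haU, hfib a haB, map_substFirst_eq, expD, Set.mem_compl_iff,
      hgood.mem_expC_map_evalCoeffs_iff, Set.mem_ofPred_eq, not_not]
  subst hδJ
  refine ⟨fun β hβ hC => hprod.leadCoeffIdeal_ne_bot_of_mem_expC hC (pr_eq_tail β ▸ hβ),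
    fun γ hγ => by_contra fun hne => ?_⟩
  obtain ⟨e, he⟩ := hprod.exists_cons_mem_expC_of_leadCoeffIdeal_ne_bot (pr_eq_tail γ ▸ hne)
  exact hγ e (mem_expC_of_le he (Finsupp.cons_tail_le_add_single γ e))

/-- Theorem (generic fiber inheritance): for a product order, if every component of `A` is
an affine `d`-plane having `X₁` among its minimal free variables, and `D(A_λ) = δ` for all
`λ` in a nonempty Zariski-open `U ⊆ 𝔸¹`, then the cuboid `ℕe₁ ⊕ δ = {α : p(α) ∈ δ}` is
contained in `D(A)` and is the largest subset of `D(A)` that is a union of `1`-planes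
`γ + ℕe₁`. -/
theorem generic_fiber_inheritance {k : Type*} [Field k] [Infinite k] {n d mm : ℕ}
    (t : MonomialOrder (Fin (n + 1))) (tb : MonomialOrder (Fin n))
    (hprod : IsProductOrder t tb)
    (P : Fin mm → Set (Fin (n + 1) → k)) (Jc : Fin mm → Finset (Fin (n + 1)))
    (hP : ∀ c, IsAffineDPlane d (P c) ∧ (Jc c).card = d ∧ IsMinFreeVars (P c) (Jc c) ∧
      (0 : Fin (n + 1)) ∈ Jc c)
    (A : Set (Fin (n + 1) → k)) (hA : A = ⋃ c, P c)
    (U : Set k) (hUopen : Uᶜ.Finite) (hUne : U.Nonempty)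
    (δ : Set (Fin n →₀ ℕ))
    (hδ : ∀ lam ∈ U, expD tb (MvPolynomial.vanishingIdeal k (fiberAt A lam)) = δ) :
    {β : Fin (n + 1) →₀ ℕ | pr β ∈ δ} ⊆ expD t (MvPolynomial.vanishingIdeal k A) ∧
      ∀ γ : Fin (n + 1) →₀ ℕ,
        (∀ c : ℕ, γ + Finsupp.single 0 c ∈ expD t (MvPolynomial.vanishingIdeal k A)) →
        pr γ ∈ δ :=
  generic_fiber_inheritance_general t tb hprod P Jc hP A hA U hUopen δ hδ
end
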